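/- For ψ, ν, χ ∈ ℝ let h(ψ,ν,χ) be the 2×2 complex matrix [[e^χ cosh ψ, sinh ψ + iν e^χ cosh ψ],[sinh ψ − iν e^χ cosh ψ, (e^{−χ} + ν² e^χ) cosh ψ]]. Then the map (ψ, ν, χ) ↦ h(ψ,ν,χ) is a bijection from ℝ³ onto H₃⁺, the set of 2×2 complex matrices h with h† = h, det h = 1, and tr h > 0. -/

import Mathlib

open Matrix

/-- The parametrization `h(ψ,ν,χ) = c(ν,χ) h_ψ c(ν,χ)†` of `H₃⁺`. -/
noncomputable def hmat (ψ ν χ : ℝ) : Matrix (Fin 2) (Fin 2) ℂ :=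
  !![(Real.exp χ : ℂ) * (Real.cosh ψ : ℂ),
     (Real.sinh ψ : ℂ) + Complex.I * (ν : ℂ) * (Real.exp χ : ℂ) * (Real.cosh ψ : ℂ);
     (Real.sinh ψ : ℂ) - Complex.I * (ν : ℂ) * (Real.exp χ : ℂ) * (Real.cosh ψ : ℂ),
     ((Real.exp (-χ) : ℂ) + (ν : ℂ) ^ 2 * (Real.exp χ : ℂ)) * (Real.cosh ψ : ℂ)]

lemma hmat00 (ψ ν χ : ℝ) : hmat ψ ν χ 0 0 = (Real.exp χ : ℂ) * (Real.cosh ψ : ℂ) := rfl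
lemma hmat01 (ψ ν χ : ℝ) : hmat ψ ν χ 0 1 =
    (Real.sinh ψ : ℂ) + Complex.I * (ν : ℂ) * (Real.exp χ : ℂ) * (Real.cosh ψ : ℂ) := rfl
lemma hmat10 (ψ ν χ : ℝ) : hmat ψ ν χ 1 0 =
    (Real.sinh ψ : ℂ) - Complex.I * (ν : ℂ) * (Real.exp χ : ℂ) * (Real.cosh ψ : ℂ) := rfl
lemma hmat11 (ψ ν χ : ℝ) : hmat ψ ν χ 1 1 =
    ((Real.exp (-χ) : ℂ) + (ν : ℂ) ^ 2 * (Real.exp χ : ℂ)) * (Real.cosh ψ : ℂ) := rfl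

lemma hmat10_re (ψ ν χ : ℝ) : (hmat ψ ν χ 1 0).re = Real.sinh ψ := by
  rw [hmat10]
  simp only [Complex.sub_re, Complex.mul_re, Complex.mul_im, Complex.I_re, Complex.I_im,
    Complex.ofReal_re, Complex.ofReal_im]
  ring

lemma hmat10_im (ψ ν χ : ℝ) : (hmat ψ ν χ 1 0).im = -(ν * (Real.exp χ * Real.cosh ψ)) := by
  rw [hmat10]
  simp only [Complex.sub_im, Complex.mul_re, Complex.mul_im, Complex.I_re, Complex.I_im,
    Complex.ofReal_re, Complex.ofReal_im]
  ring

lemma hmat_herm (ψ ν χ : ℝ) : (hmat ψ ν χ).IsHermitian := by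
  apply Matrix.IsHermitian.ext
  intro i j
  fin_cases i <;> fin_cases j <;>
    simp only [Fin.mk_zero, Fin.mk_one, hmat00, hmat01, hmat10, hmat11, Complex.star_def,
      map_add, map_sub, _root_.map_mul, map_pow, Complex.conj_ofReal, Complex.conj_I] <;> ring

lemma hmat_det (ψ ν χ : ℝ) : (hmat ψ ν χ).det = 1 := by
  have h1 : (Real.cosh ψ : ℂ)^2 - (Real.sinh ψ : ℂ)^2 = 1 := by
    norm_cast; exact Real.cosh_sq_sub_sinh_sq ψ
  have h2 : (Real.exp χ : ℂ) * (Real.exp (-χ) : ℂ) = 1 := by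
    rw [← Complex.ofReal_mul, ← Real.exp_add]; simp
  have h3 : Complex.I ^ 2 = -1 := Complex.I_sq
  rw [Matrix.det_fin_two, hmat00, hmat01, hmat10, hmat11]
  linear_combination (Real.cosh ψ : ℂ)^2 * h2 + h1 +
    (ν : ℂ)^2 * (Real.exp χ : ℂ)^2 * (Real.cosh ψ : ℂ)^2 * h3

lemma hmat_trace (ψ ν χ : ℝ) : 0 < (hmat ψ ν χ).trace.re := by
  rw [Matrix.trace_fin_two, hmat00, hmat11]
  push_cast [← Complex.ofReal_exp]
  norm_cast
  positivity

/-- The map `(ψ, ν, χ) ↦ h(ψ,ν,χ)` is a bijection from `ℝ³`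
onto `H₃⁺ = {h : h† = h, det h = 1, tr h > 0}`. -/
theorem stmt_16 :
    Set.BijOn (fun p : ℝ × ℝ × ℝ => hmat p.1 p.2.1 p.2.2)
      Set.univ
      {h : Matrix (Fin 2) (Fin 2) ℂ | h.IsHermitian ∧ h.det = 1 ∧ 0 < h.trace.re} := by
  refine ⟨fun p _ => ⟨hmat_herm _ _ _, hmat_det _ _ _, hmat_trace _ _ _⟩, ?_, ?_⟩
  · -- injectivity
    rintro ⟨ψ, ν, χ⟩ - ⟨ψ', ν', χ'⟩ - h
    simp only at h
    have h10re : Real.sinh ψ = Real.sinh ψ' := by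
      rw [← hmat10_re ψ ν χ, ← hmat10_re ψ' ν' χ', h]
    have hψ : ψ = ψ' := Real.sinh_injective h10re
    subst hψ
    have h00 : (Real.exp χ : ℂ) * (Real.cosh ψ : ℂ) = (Real.exp χ' : ℂ) * (Real.cosh ψ : ℂ) := by
      rw [← hmat00 ψ ν χ, ← hmat00 ψ ν' χ', h]
    have hcpos : (0:ℝ) < Real.cosh ψ := Real.cosh_pos ψ
    have hE : Real.exp χ * Real.cosh ψ = Real.exp χ' * Real.cosh ψ := by exact_mod_cast h00
    have hχ : χ = χ' := Real.exp_injective (mul_right_cancel₀ (ne_of_gt hcpos) hE)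
    subst hχ
    have him : -(ν * (Real.exp χ * Real.cosh ψ)) = -(ν' * (Real.exp χ * Real.cosh ψ)) := by
      rw [← hmat10_im ψ ν χ, ← hmat10_im ψ ν' χ, h]
    have hp : (0:ℝ) < Real.exp χ * Real.cosh ψ := by positivity
    have hν : ν = ν' := mul_right_cancel₀ (ne_of_gt hp) (by linarith)
    rw [hν]
  · -- surjectivity
    rintro h ⟨hH, hdet, htr⟩
    set a : ℝ := (h 0 0).re with ha
    set d : ℝ := (h 1 1).re with hd
    set s : ℝ := (h 1 0).re with hs
    set t : ℝ := (h 1 0).im with ht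
    have e00 : h 0 0 = (a : ℂ) := by
      have h0 := hH.apply 0 0
      have : (h 0 0).im = 0 := by
        have := congrArg Complex.im h0
        simp [Complex.star_def] at this
        linarith
      exact Complex.ext rfl (by simpa using this)
    have e11 : h 1 1 = (d : ℂ) := by
      have h0 := hH.apply 1 1
      have : (h 1 1).im = 0 := by
        have := congrArg Complex.im h0
        simp [Complex.star_def] at this
        linarith
      exact Complex.ext rfl (by simpa using this)
    have e10 : h 1 0 = (s : ℂ) + Complex.I * (t : ℂ) := by
      apply Complex.ext <;> simp [hs, ht]
    have e01 : h 0 1 = (s : ℂ) - Complex.I * (t : ℂ) := by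
      have h0 := hH.apply 1 0
      have h1 := congrArg star h0
      rw [star_star] at h1
      rw [h1, e10]
      simp [Complex.star_def, map_add, _root_.map_mul, Complex.conj_ofReal, Complex.conj_I]
      ring
    have hdet2 : a * d - (s ^ 2 + t ^ 2) = 1 := by
      rw [Matrix.det_fin_two, e00, e11, e10, e01] at hdet
      have := congrArg Complex.re hdet
      simp only [Complex.sub_re, Complex.mul_re, Complex.mul_im, Complex.add_re, Complex.add_im,
        Complex.sub_im, Complex.I_re, Complex.I_im, Complex.ofReal_re, Complex.ofReal_im,
        Complex.one_re] at this
      nlinarith [this]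
    have htr2 : 0 < a + d := by
      rw [Matrix.trace_fin_two] at htr
      simpa [Complex.add_re] using htr
    have hapos : 0 < a := by nlinarith
    -- the parameters
    set C : ℝ := Real.sqrt (1 + s ^ 2) with hC
    have hCpos : 0 < C := Real.sqrt_pos.mpr (by positivity)
    have hC2 : C ^ 2 = 1 + s ^ 2 := Real.sq_sqrt (by positivity)
    set ψ : ℝ := Real.arsinh s with hψ
    set ν : ℝ := -t / a with hν
    set χ : ℝ := Real.log (a / C) with hχ
    have hSinh : Real.sinh ψ = s := Real.sinh_arsinh s
    have hCosh : Real.cosh ψ = C := by rw [hψ, Real.cosh_arsinh]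
    have hExp : Real.exp χ = a / C := Real.exp_log (by positivity)
    have hExpNeg : Real.exp (-χ) = C / a := by
      rw [Real.exp_neg, hExp, inv_div]
    have hEC : Real.exp χ * Real.cosh ψ = a := by
      rw [hExp, hCosh]; field_simp
    have hνEC : ν * Real.exp χ * Real.cosh ψ = -t := by
      rw [hν, hExp, hCosh]; field_simp
    have h11eq : (Real.exp (-χ) + ν ^ 2 * Real.exp χ) * Real.cosh ψ = d := by
      rw [hExpNeg, hExp, hCosh, hν]
      field_simp
      linear_combination hC2 - hdet2
    refine ⟨(ψ, ν, χ), Set.mem_univ _, ?_⟩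
    have c1 : (Real.sinh ψ : ℂ) = (s : ℂ) := by exact_mod_cast hSinh
    have c2 : (ν : ℂ) * (Real.exp χ : ℂ) * (Real.cosh ψ : ℂ) = -(t : ℂ) := by
      exact_mod_cast hνEC
    ext i j
    fin_cases i <;> fin_cases j <;>
      simp only [Fin.mk_zero, Fin.mk_one, hmat00, hmat01, hmat10, hmat11, e00, e01, e10, e11]
    · rw [← Complex.ofReal_mul, hEC]
    · linear_combination c1 + Complex.I * c2
    · linear_combination c1 - Complex.I * c2
    · rw [← h11eq]; push_cast; ring
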